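/- arXiv:2004.13855 — 2 statements merged into one kernel-verified Lean document; each statement's English description precedes it below -/
import Mathlib

section
/- For the boundary operator Δ on the free ℤ-module with ordered basis (z_1, z_2, y_1, y_2, y_3, x_1, x_2) given by Δx_1 = -y_1 + y_2 + y_3, Δx_2 = y_1 - y_2 - y_3, Δy_1 = z_1 - z_2, Δy_2 = z_1 - z_2, Δy_3 = 0, Δz_1 = Δz_2 = 0, one has Δ∘Δ = 0, and the homology of the resulting chain complex is H_0 ≅ ℤ, H_1 ≅ ℤ, H_2 ≅ ℤ. -/
/-- The GS-boundary operator of the pinched-torus cone example squares to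
zero, and the homology of the resulting chain complex (with `C₀ = ℤ⟨z₁,z₂⟩`,
`C₁ = ℤ⟨y₁,y₂,y₃⟩`, `C₂ = ℤ⟨x₁,x₂⟩`) is `H₀ ≅ ℤ`, `H₁ ≅ ℤ`, `H₂ ≅ ℤ`. -/
theorem stmt_4
    (d₂ : (Fin 2 → ℤ) →ₗ[ℤ] (Fin 3 → ℤ)) (d₁ : (Fin 3 → ℤ) →ₗ[ℤ] (Fin 2 → ℤ))
    -- Δx₁ = -y₁ + y₂ + y₃, Δx₂ = y₁ - y₂ - y₃
    (hd₂ : d₂ = Matrix.toLin' !![-1, 1; 1, -1; 1, -1])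
    -- Δy₁ = z₁ - z₂, Δy₂ = z₁ - z₂, Δy₃ = 0
    (hd₁ : d₁ = Matrix.toLin' !![1, 1, 0; -1, -1, 0]) :
    d₁ ∘ₗ d₂ = 0 ∧
      Nonempty (((Fin 2 → ℤ) ⧸ LinearMap.range d₁) ≃ₗ[ℤ] ℤ) ∧
      Nonempty ((↥(LinearMap.ker d₁) ⧸
        (LinearMap.range d₂).comap (LinearMap.ker d₁).subtype) ≃ₗ[ℤ] ℤ) ∧
      Nonempty (↥(LinearMap.ker d₂) ≃ₗ[ℤ] ℤ) := by
  subst hd₂ hd₁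
  have hd₂app : ∀ v : Fin 2 → ℤ, ∀ i,
      (Matrix.toLin' !![-1, 1; 1, -1; 1, -1] : (Fin 2 → ℤ) →ₗ[ℤ] (Fin 3 → ℤ)) v i
        = ![-v 0 + v 1, v 0 - v 1, v 0 - v 1] i := by
    intro v i
    fin_cases i <;>
      simp [Matrix.toLin'_apply, Matrix.mulVec, dotProduct, Fin.sum_univ_succ, Matrix.vecHead, Matrix.vecTail] <;> ring
  have hd₁app : ∀ v : Fin 3 → ℤ, ∀ i,
      (Matrix.toLin' !![1, 1, 0; -1, -1, 0] : (Fin 3 → ℤ) →ₗ[ℤ] (Fin 2 → ℤ)) v i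
        = ![v 0 + v 1, -v 0 - v 1] i := by
    intro v i
    fin_cases i <;>
      simp [Matrix.toLin'_apply, Matrix.mulVec, dotProduct, Fin.sum_univ_succ, Matrix.vecHead, Matrix.vecTail] <;> ring
  refine ⟨?_, ⟨?_⟩, ⟨?_⟩, ⟨?_⟩⟩
  · -- d₁ ∘ d₂ = 0
    apply LinearMap.ext
    intro v
    funext i
    simp only [LinearMap.comp_apply, LinearMap.zero_apply]
    rw [hd₁app, hd₂app, hd₂app]
    fin_cases i <;> simp <;> ring
  · -- H₀ ≅ ℤ
    let f : (Fin 2 → ℤ) →ₗ[ℤ] ℤ := (LinearMap.proj 0 : (Fin 2 → ℤ) →ₗ[ℤ] ℤ) + LinearMap.proj 1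
    have hfsurj : Function.Surjective f := by
      intro n
      exact ⟨![n, 0], by simp [f]⟩
    have hrange : LinearMap.range (Matrix.toLin' !![1, 1, 0; -1, -1, 0])
        = LinearMap.ker f := by
      ext w
      constructor
      · rintro ⟨v, rfl⟩
        simp only [LinearMap.mem_ker, f, LinearMap.add_apply, LinearMap.proj_apply]
        rw [hd₁app, hd₁app]
        simp
      · intro hw
        simp only [LinearMap.mem_ker, f, LinearMap.add_apply, LinearMap.proj_apply] at hw
        refine ⟨![w 0, 0, 0], ?_⟩
        funext i
        rw [hd₁app]
        fin_cases i <;> simp <;> linarith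
    exact (Submodule.quotEquivOfEq _ _ hrange).trans (f.quotKerEquivOfSurjective hfsurj)
  · -- H₁ ≅ ℤ
    set N := LinearMap.ker (Matrix.toLin' !![1, 1, 0; -1, -1, 0] :
      (Fin 3 → ℤ) →ₗ[ℤ] (Fin 2 → ℤ)) with hN
    let g : N →ₗ[ℤ] ℤ := ((LinearMap.proj 0 : (Fin 3 → ℤ) →ₗ[ℤ] ℤ) + LinearMap.proj 2) ∘ₗ N.subtype
    have hgsurj : Function.Surjective g := by
      intro n
      refine ⟨⟨![0, 0, n], ?_⟩, ?_⟩
      · simp only [hN, LinearMap.mem_ker]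
        funext i
        rw [hd₁app]
        fin_cases i <;> simp
      · simp [g]
    have hker : LinearMap.ker g
        = (LinearMap.range (Matrix.toLin' !![-1, 1; 1, -1; 1, -1])).comap N.subtype := by
      ext ⟨v, hv⟩
      have hv' : v 0 + v 1 = 0 := by
        have := congrFun (LinearMap.mem_ker.mp hv) 0
        rw [hd₁app] at this
        simpa using this
      constructor
      · intro hg
        simp only [LinearMap.mem_ker, g, LinearMap.comp_apply, Submodule.subtype_apply,
          LinearMap.add_apply, LinearMap.proj_apply] at hg
        refine Submodule.mem_comap.mpr ⟨![-v 0, 0], ?_⟩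
        funext i
        rw [hd₂app]
        fin_cases i <;> simp <;> linarith
      · rintro h
        obtain ⟨u, hu⟩ := Submodule.mem_comap.mp h
        simp only [LinearMap.mem_ker, g, LinearMap.comp_apply, Submodule.subtype_apply,
          LinearMap.add_apply, LinearMap.proj_apply]
        have h0 := congrFun hu 0
        have h2 := congrFun hu 2
        rw [hd₂app] at h0 h2
        simp only [Submodule.subtype_apply] at h0 h2
        simp at h0 h2
        omega
    exact (Submodule.quotEquivOfEq _ _ hker.symm).trans (g.quotKerEquivOfSurjective hgsurj)
  · -- H₂ ≅ ℤ
    set K := LinearMap.ker (Matrix.toLin' !![-1, 1; 1, -1; 1, -1] :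
      (Fin 2 → ℤ) →ₗ[ℤ] (Fin 3 → ℤ)) with hK
    refine LinearEquiv.ofBijective ((LinearMap.proj 0 : (Fin 2 → ℤ) →ₗ[ℤ] ℤ) ∘ₗ K.subtype) ⟨?_, ?_⟩
    · rintro ⟨v, hv⟩ ⟨w, hw⟩ h
      simp only [LinearMap.comp_apply, Submodule.subtype_apply, LinearMap.proj_apply] at h
      have hv1 : v 1 = v 0 := by
        have := congrFun (LinearMap.mem_ker.mp hv) 0
        rw [hd₂app] at this
        simp at this
        omega
      have hw1 : w 1 = w 0 := by
        have := congrFun (LinearMap.mem_ker.mp hw) 0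
        rw [hd₂app] at this
        simp at this
        omega
      apply Subtype.ext
      funext i
      fin_cases i <;> simp [h, hv1, hw1]
    · intro n
      refine ⟨⟨![n, n], ?_⟩, ?_⟩
      · simp only [hK, LinearMap.mem_ker]
        funext i
        rw [hd₂app]
        fin_cases i <;> simp
      · simp
end

section
/- For the boundary operator Δ on a graded free ℤ-module with C_0 = ℤ⟨z_1⟩ ⊕ ℤ⟨z_2⟩, C_1 = ℤ⟨y_1⟩ ⊕ ℤ⟨y_2⟩ ⊕ ℤ⟨y_3⟩, C_2 = ℤ⟨x_1⟩ ⊕ ℤ⟨x_2⟩ ⊕ ℤ⟨x_3⟩, given by Δx_1 = -y_2, Δx_2 = y_1 + y_2, Δx_3 = -y_1, Δy_1 = Δy_2 = 0, Δy_3 = z_2 - z_1, one has Δ∘Δ = 0, and H_0 ≅ ℤ, H_1 = 0, H_2 ≅ ℤ. -/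
/-!
In coordinates indexed from `0`, `Δ₂ v = (v₁ - v₂, v₁ - v₀, 0)` and `Δ₁ v = (-v₂, v₂)`, so
`Δ₁ ∘ Δ₂ = 0` because `Δ₂` has vanishing last coordinate. The homology is read off three
exactness statements: the image of `Δ₁` is the kernel of the augmentation `z ↦ z₀ + z₁`,
every cycle `(a, b, 0)` of `Δ₁` is the boundary `Δ₂ (-b, 0, -a)`, and the cycles of `Δ₂` are
the constant vectors `t • (1, 1, 1)`.
-/

open LinearMap Submodule

namespace Whitney

def boundary₂ : (Fin 3 → ℤ) →ₗ[ℤ] (Fin 3 → ℤ) :=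
  Matrix.toLin' !![0, 1, -1; -1, 1, 0; 0, 0, 0]

def boundary₁ : (Fin 3 → ℤ) →ₗ[ℤ] (Fin 2 → ℤ) :=
  Matrix.toLin' !![0, 0, -1; 0, 0, 1]

def augmentation : (Fin 2 → ℤ) →ₗ[ℤ] ℤ := proj (R := ℤ) (φ := fun _ : Fin 2 => ℤ) 0 + proj 1

lemma boundary₂_apply (v : Fin 3 → ℤ) : boundary₂ v = ![v 1 - v 2, v 1 - v 0, 0] := by
  ext i
  fin_cases i <;> simp [boundary₂, Matrix.mulVec, dotProduct, Fin.sum_univ_succ] <;> ring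

lemma boundary₁_apply (v : Fin 3 → ℤ) : boundary₁ v = ![-v 2, v 2] := by
  ext i
  fin_cases i <;> simp [boundary₁, Matrix.mulVec, dotProduct, Fin.sum_univ_succ]

lemma augmentation_apply (v : Fin 2 → ℤ) : augmentation v = v 0 + v 1 := rfl

lemma augmentation_surjective : Function.Surjective augmentation :=
  fun n => ⟨![n, 0], by simp [augmentation_apply]⟩

lemma boundary₁_comp_boundary₂ : boundary₁ ∘ₗ boundary₂ = 0 := by
  ext v i
  fin_cases i <;> simp [boundary₁_apply, boundary₂_apply]

lemma range_boundary₁ : range boundary₁ = ker augmentation := by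
  ext v
  simp only [mem_range, mem_ker, augmentation_apply]
  constructor
  · rintro ⟨w, rfl⟩
    simp [boundary₁_apply]
  · intro hv
    refine ⟨![0, 0, v 1], ?_⟩
    ext i
    fin_cases i <;> simp [boundary₁_apply]
    omega

lemma ker_boundary₁_le_range_boundary₂ : ker boundary₁ ≤ range boundary₂ := by
  intro v hv
  have hv₂ : v 2 = 0 := by
    simpa [boundary₁_apply] using congrFun (mem_ker.mp hv) 1
  refine ⟨![-v 1, 0, -v 0], ?_⟩
  ext i
  fin_cases i <;> simp [boundary₂_apply, hv₂]

lemma ker_boundary₂ : ker boundary₂ = range (toSpanSingleton ℤ (Fin 3 → ℤ) 1) := by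
  ext v
  simp only [mem_ker, mem_range, toSpanSingleton_apply, boundary₂_apply]
  constructor
  · intro hv
    have h₀ : v 1 - v 2 = 0 := by simpa using congrFun hv 0
    have h₁ : v 1 - v 0 = 0 := by simpa using congrFun hv 1
    refine ⟨v 0, ?_⟩
    ext i
    fin_cases i <;> simp <;> omega
  · rintro ⟨t, rfl⟩
    simp

end Whitney

open Whitney in
/-- The GS-boundary operator of the Whitney example (with `C₀ = ℤ⟨z₁,z₂⟩`,
`C₁ = ℤ⟨y₁,y₂,y₃⟩`, `C₂ = ℤ⟨x₁,x₂,x₃⟩`) squares to zero and has homology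
`H₀ ≅ ℤ`, `H₁ = 0`, `H₂ ≅ ℤ`. -/
theorem stmt_5
    (d₂ : (Fin 3 → ℤ) →ₗ[ℤ] (Fin 3 → ℤ)) (d₁ : (Fin 3 → ℤ) →ₗ[ℤ] (Fin 2 → ℤ))
    -- Δx₁ = -y₂, Δx₂ = y₁ + y₂, Δx₃ = -y₁
    (hd₂ : d₂ = Matrix.toLin' !![0, 1, -1; -1, 1, 0; 0, 0, 0])
    -- Δy₁ = 0, Δy₂ = 0, Δy₃ = z₂ - z₁
    (hd₁ : d₁ = Matrix.toLin' !![0, 0, -1; 0, 0, 1]) :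
    d₁ ∘ₗ d₂ = 0 ∧
      Nonempty (((Fin 2 → ℤ) ⧸ LinearMap.range d₁) ≃ₗ[ℤ] ℤ) ∧
      Subsingleton (↥(LinearMap.ker d₁) ⧸
        (LinearMap.range d₂).comap (LinearMap.ker d₁).subtype) ∧
      Nonempty (↥(LinearMap.ker d₂) ≃ₗ[ℤ] ℤ) := by
  obtain rfl : d₂ = boundary₂ := hd₂
  obtain rfl : d₁ = boundary₁ := hd₁
  refine ⟨boundary₁_comp_boundary₂, ⟨?_⟩, ?_, ⟨?_⟩⟩
  · exact (quotEquivOfEq _ _ range_boundary₁).trans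
      (augmentation.quotKerEquivOfSurjective augmentation_surjective)
  · rw [Submodule.Quotient.subsingleton_iff, comap_subtype_eq_top]
    exact ker_boundary₁_le_range_boundary₂
  · exact (LinearEquiv.ofEq _ _ ker_boundary₂).trans
      (LinearEquiv.ofInjective _ (smul_left_injective ℤ one_ne_zero)).symm
end
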